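/- arXiv:math/0311221 — 4 statements merged into one kernel-verified Lean document; each statement's English description precedes it below -/
import Mathlib

section
/- Let γ : I → H3 be a unit-speed curve with Frenet frame {T,N,B} satisfying ∇_T T = kN, ∇_T N = -kT - τB, ∇_T B = τN, and write B₃ = g(B,e3), N₃ = g(N,e3). Then the bitension field satisfies τ₂(γ) = ∇_T³T + R(T, kN)T = (-3k'k)T + (k'' - k³ - kτ² + k/4 - kB₃²)N + (-2k'τ - kτ' + kN₃B₃)B. -/
noncomputable section

/-- Points of the Heisenberg group `H₃ = ℝ³`. -/
abbrev R3 := ℝ × ℝ × ℝ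

/-- The left-invariant frame field `e₁ = ∂x - (y/2)∂z`. -/
def e1 : R3 → R3 := fun p => (1, 0, -p.2.1 / 2)
/-- The left-invariant frame field `e₂ = ∂y + (x/2)∂z`. -/
def e2 : R3 → R3 := fun p => (0, 1, p.1 / 2)
/-- The left-invariant frame field `e₃ = ∂z`. -/
def e3 : R3 → R3 := fun _ => (0, 0, 1)

/-- The Heisenberg metric `g = dx² + dy² + (dz + (y/2)dx - (x/2)dy)²`. -/
def gm (p v w : R3) : ℝ :=
  v.1 * w.1 + v.2.1 * w.2.1 +
    (v.2.2 + p.2.1 / 2 * v.1 - p.1 / 2 * v.2.1) *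
      (w.2.2 + p.2.1 / 2 * w.1 - p.1 / 2 * w.2.1)

/-- Lie bracket of vector fields on `ℝ³` (in coordinate components). -/
def bracket (X Y : R3 → R3) : R3 → R3 :=
  fun p => fderiv ℝ Y p (X p) - fderiv ℝ X p (Y p)

/-- Directional derivative of a scalar function along a vector field. -/
def dd (X : R3 → R3) (f : R3 → ℝ) : R3 → ℝ := fun p => fderiv ℝ f p (X p)

/-- The Koszul expression `g(∇_X Y, Z)` characterizing the Levi-Civita connection. -/
def koszul (X Y Z : R3 → R3) : R3 → ℝ := fun p =>
  (dd X (fun q => gm q (Y q) (Z q)) p + dd Y (fun q => gm q (X q) (Z q)) p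
    - dd Z (fun q => gm q (X q) (Y q)) p
    + gm p (bracket X Y p) (Z p) - gm p (bracket X Z p) (Y p)
    - gm p (bracket Y Z p) (X p)) / 2

/-- The Levi-Civita connection of the Heisenberg metric, recovered from the Koszul
formula via the orthonormal frame `e₁, e₂, e₃`. -/
def nabla (X Y : R3 → R3) : R3 → R3 := fun p =>
  koszul X Y e1 p • e1 p + koszul X Y e2 p • e2 p + koszul X Y e3 p • e3 p

/-- Curvature operator `R(X,Y)Z = -∇_X∇_Y Z + ∇_Y∇_X Z + ∇_{[X,Y]}Z`. -/
def Rc (X Y Z : R3 → R3) : R3 → R3 := fun p =>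
  -nabla X (nabla Y Z) p + nabla Y (nabla X Z) p + nabla (bracket X Y) Z p

/-- Riemann-Christoffel tensor `R(X,Y,Z,W) = g(R(X,Y)Z, W)`. -/
def R4 (X Y Z W : R3 → R3) : R3 → ℝ := fun p => gm p (Rc X Y Z p) (W p)

/-- Ricci tensor `ρ(X,Y) = trace (Z ↦ R(X,Z)Y)`, computed in the orthonormal frame. -/
def ricci (X Y : R3 → R3) : R3 → ℝ := fun p =>
  gm p (Rc X e1 Y p) (e1 p) + gm p (Rc X e2 Y p) (e2 p) + gm p (Rc X e3 Y p) (e3 p)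

/-- Components of a (coordinate) tangent vector `v` at `p` with respect to the
orthonormal frame `e₁, e₂, e₃`. -/
def fc (p v : R3) : R3 := (v.1, v.2.1, v.2.2 + p.2.1 / 2 * v.1 - p.1 / 2 * v.2.1)

/-- Frame components of the velocity field of a curve `γ`. -/
def tv (γ : ℝ → R3) (s : ℝ) : R3 := fc (γ s) (deriv γ s)

/-- Inner product of frame components (the frame is `g`-orthonormal). -/
def dot (v w : R3) : ℝ := v.1 * w.1 + v.2.1 * w.2.1 + v.2.2 * w.2.2

/-- Cross product of frame components (the frame is orthonormal and positively oriented). -/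
def cross (v w : R3) : R3 :=
  (v.2.1 * w.2.2 - v.2.2 * w.2.1, v.2.2 * w.1 - v.1 * w.2.2, v.1 * w.2.1 - v.2.1 * w.1)

/-- Covariant derivative `∇_{γ'} V` along a curve `γ` of a vector field `V` given by its
frame components, expressed again in frame components, using the connection coefficients
of the Levi-Civita connection of the Heisenberg metric in the frame `e₁, e₂, e₃`. -/
def covD (γ : ℝ → R3) (V : ℝ → R3) : ℝ → R3 := fun s =>
  let t := tv γ s
  (deriv (fun u => (V u).1) s + (V s).2.1 * t.2.2 / 2 + (V s).2.2 * t.2.1 / 2,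
   deriv (fun u => (V u).2.1) s - (V s).1 * t.2.2 / 2 - (V s).2.2 * t.1 / 2,
   deriv (fun u => (V u).2.2) s - (V s).1 * t.2.1 / 2 + (V s).2.1 * t.1 / 2)

/-- The left-invariant vector field with constant frame components `v`. -/
def ext (v : R3) : R3 → R3 := fun p => v.1 • e1 p + v.2.1 • e2 p + v.2.2 • e3 p

/-- Pointwise curvature operator on frame components: `R` is tensorial, so its value on
vectors at `p` (given in frame components) is computed via left-invariant extensions. -/
def Rfr (p : R3) (x y z : R3) : R3 := fc p (Rc (ext x) (ext y) (ext z) p)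

/-- Bitension field `τ₂(γ) = ∇_T³ T + R(T, ∇_T T) T` of a unit-speed curve, where `T`
is the unit tangent in frame components. -/
def bitension (γ T : ℝ → R3) (s : ℝ) : R3 :=
  covD γ (covD γ (covD γ T)) s + Rfr (γ s) (T s) (covD γ T s) (T s)

/-- A curve is biharmonic iff its bitension field vanishes. -/
def Biharmonic (γ T : ℝ → R3) : Prop := ∀ s, bitension γ T s = 0

/-- Frenet data of a unit-speed curve in `H₃`: `T, N, B` are the frame components of the
Frenet frame, `k > 0` is the geodesic curvature and `τ` the geodesic torsion, satisfying
the Frenet equations `∇_T T = kN`, `∇_T N = -kT - τB`, `∇_T B = τN`, with `B = T × N`. -/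
structure Frenet (γ T N B : ℝ → R3) (k τ : ℝ → ℝ) : Prop where
  smooth_γ : ContDiff ℝ (⊤ : ℕ∞) γ
  smooth_T : ContDiff ℝ (⊤ : ℕ∞) T
  smooth_N : ContDiff ℝ (⊤ : ℕ∞) N
  smooth_B : ContDiff ℝ (⊤ : ℕ∞) B
  smooth_k : ContDiff ℝ (⊤ : ℕ∞) k
  smooth_τ : ContDiff ℝ (⊤ : ℕ∞) τ
  tangent : ∀ s, T s = tv γ s
  unit : ∀ s, dot (T s) (T s) = 1
  normal_unit : ∀ s, dot (N s) (N s) = 1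
  fr1 : ∀ s, covD γ T s = k s • N s
  fr2 : ∀ s, covD γ N s = -(k s • T s) - τ s • B s
  fr3 : ∀ s, covD γ B s = τ s • N s
  binormal : ∀ s, B s = cross (T s) (N s)

namespace BitAux

/-- Connection coefficients in the left-invariant frame. -/
def Gam (x y : R3) : R3 :=
  ((x.2.1 * y.2.2 + x.2.2 * y.2.1) / 2, -(x.1 * y.2.2 + x.2.2 * y.1) / 2,
   (x.1 * y.2.1 - x.2.1 * y.1) / 2)

def extL (v : R3) : R3 →L[ℝ] R3 :=
  (0 : R3 →L[ℝ] ℝ).prod ((0 : R3 →L[ℝ] ℝ).prod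
    ((v.2.1 / 2) • (ContinuousLinearMap.fst ℝ ℝ (ℝ × ℝ)) -
     (v.1 / 2) • ((ContinuousLinearMap.fst ℝ ℝ ℝ).comp (ContinuousLinearMap.snd ℝ ℝ (ℝ × ℝ)))))

lemma extL_apply (v u : R3) :
    extL v u = (0, 0, u.1 * (v.2.1 / 2) - u.2.1 * (v.1 / 2)) := by
  simp [extL, Prod.ext_iff]
  ring

lemma ext_eq (v : R3) : ext v = fun p => (v.1, v.2.1, v.2.2) + extL v p := by
  funext p
  simp [ext, e1, e2, e3, extL_apply, Prod.ext_iff]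
  ring

lemma hasFDerivAt_ext (v p : R3) : HasFDerivAt (ext v) (extL v) p := by
  rw [ext_eq]
  exact (extL v).hasFDerivAt.const_add _

lemma fderiv_ext (v p : R3) : fderiv ℝ (ext v) p = extL v := (hasFDerivAt_ext v p).fderiv

lemma bracket_ext (x y : R3) :
    bracket (ext x) (ext y) = ext (0, 0, x.1 * y.2.1 - x.2.1 * y.1) := by
  funext p
  simp [bracket, fderiv_ext, extL_apply, ext, e1, e2, e3, Prod.ext_iff]
  ring

lemma gm_ext (v w : R3) : (fun q => gm q (ext v q) (ext w q)) = fun _ => dot v w := by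
  funext q
  simp [gm, ext, e1, e2, e3, dot]
  ring

lemma gm_ext_apply (p v w : R3) : gm p (ext v p) (ext w p) = dot v w :=
  congrFun (gm_ext v w) p

lemma koszul_ext (x y z : R3) (p : R3) :
    koszul (ext x) (ext y) (ext z) p =
      ((x.1 * y.2.1 - x.2.1 * y.1) * z.2.2 - (x.1 * z.2.1 - x.2.1 * z.1) * y.2.2
        - (y.1 * z.2.1 - y.2.1 * z.1) * x.2.2) / 2 := by
  simp only [koszul, dd, gm_ext, bracket_ext, gm_ext_apply, fderiv_fun_const, Pi.zero_apply,
    ContinuousLinearMap.zero_apply, dot]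
  ring

lemma e1_ext : e1 = ext (1, 0, 0) := by funext p; simp [ext, e1, e2, e3, Prod.ext_iff] <;> norm_num
lemma e2_ext : e2 = ext (0, 1, 0) := by funext p; simp [ext, e1, e2, e3, Prod.ext_iff] <;> norm_num
lemma e3_ext : e3 = ext (0, 0, 1) := by funext p; simp [ext, e1, e2, e3, Prod.ext_iff] <;> norm_num

lemma nabla_ext (x y : R3) : nabla (ext x) (ext y) = ext (Gam x y) := by
  funext p
  rw [show nabla (ext x) (ext y) p =
      koszul (ext x) (ext y) e1 p • e1 p + koszul (ext x) (ext y) e2 p • e2 p +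
        koszul (ext x) (ext y) e3 p • e3 p from rfl]
  rw [e1_ext, e2_ext, e3_ext]
  simp only [koszul_ext]
  simp [ext, Gam, e1, e2, e3, Prod.ext_iff]
  first
  | refine ⟨by ring, by ring, by ring⟩
  | ring
  | ring_nf

lemma Rc_ext (x y z : R3) (p : R3) :
    Rc (ext x) (ext y) (ext z) p =
      ext (-(Gam x (Gam y z)) + Gam y (Gam x z) +
        Gam (0, 0, x.1 * y.2.1 - x.2.1 * y.1) z) p := by
  simp only [Rc, nabla_ext, bracket_ext]
  simp [ext, e1, e2, e3, Prod.ext_iff]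
  first
  | refine ⟨by ring, by ring, by ring⟩
  | ring
  | ring_nf

lemma fc_ext (p v : R3) : fc p (ext v p) = v := by
  simp [fc, ext, e1, e2, e3, Prod.ext_iff]
  ring

lemma Rfr_formula (p x y z : R3) :
    Rfr p x y z = -(Gam x (Gam y z)) + Gam y (Gam x z) +
      Gam (0, 0, x.1 * y.2.1 - x.2.1 * y.1) z := by
  rw [Rfr, Rc_ext, fc_ext]

lemma curv (p : R3) (c : ℝ) (x y : R3) (hx : dot x x = 1) (hy : dot y y = 1)
    (hxy : dot x y = 0) :
    Rfr p x (c • y) x =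
      (c / 4 - c * ((cross x y).2.2) ^ 2) • y + (c * y.2.2 * (cross x y).2.2) • cross x y := by
  obtain ⟨x1, x2, x3⟩ := x
  obtain ⟨y1, y2, y3⟩ := y
  simp only [dot] at hx hy hxy
  simp only [Rfr_formula, Gam, cross, Prod.smul_mk, smul_eq_mul, Prod.mk_add_mk,
    Prod.neg_mk, Prod.mk.injEq]
  norm_num
  refine ⟨?_, ?_, ?_⟩
  · linear_combination (c * y1 / 4) * hx +
      (c * (3 / 4 * x1 - x2 * y1 * y2 - x1 * y3 ^ 2 - x1 * y1 ^ 2)) * hxy +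
      (c * (x2 ^ 2 * y1 + x1 * x3 * y3 + x1 ^ 2 * y1)) * hy
  · linear_combination (c * y2 / 4) * hx +
      (c * (3 / 4 * x2 - x2 * y3 ^ 2 - x2 * y2 ^ 2 - x1 * y1 * y2)) * hxy +
      (c * (x2 * x3 * y3 + x2 ^ 2 * y2 + x1 ^ 2 * y2)) * hy
  · linear_combination (c * y3 / 4) * hx + (-(c * x3) / 4) * hxy

lemma covD_def (γ V : ℝ → R3) (s : ℝ) : covD γ V s =
    (deriv (fun u => (V u).1) s + (V s).2.1 * (tv γ s).2.2 / 2 + (V s).2.2 * (tv γ s).2.1 / 2,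
     deriv (fun u => (V u).2.1) s - (V s).1 * (tv γ s).2.2 / 2 - (V s).2.2 * (tv γ s).1 / 2,
     deriv (fun u => (V u).2.2) s - (V s).1 * (tv γ s).2.1 / 2 + (V s).2.1 * (tv γ s).1 / 2) :=
  rfl

lemma covD_smul (γ : ℝ → R3) (f : ℝ → ℝ) (V : ℝ → R3) (s : ℝ)
    (hf : DifferentiableAt ℝ f s) (hV : DifferentiableAt ℝ V s) :
    covD γ (fun u => f u • V u) s = deriv f s • V s + f s • covD γ V s := by
  have h1 : (fun u => ((f u • V u : R3)).1) = fun u => f u * (V u).1 := rfl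
  have h2 : (fun u => ((f u • V u : R3)).2.1) = fun u => f u * (V u).2.1 := rfl
  have h3 : (fun u => ((f u • V u : R3)).2.2) = fun u => f u * (V u).2.2 := rfl
  rw [covD_def, covD_def, h1, h2, h3,
    deriv_fun_mul hf hV.fst, deriv_fun_mul hf hV.snd.fst, deriv_fun_mul hf hV.snd.snd]
  simp only [Prod.smul_fst, Prod.smul_snd, smul_eq_mul, Prod.mk_add_mk, Prod.smul_mk,
    Prod.mk.injEq, Prod.fst_add, Prod.snd_add, Prod.ext_iff]
  first
  | refine ⟨by ring, by ring, by ring⟩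
  | refine ⟨by ring, by ring⟩
  | ring

lemma covD_comb (γ : ℝ → R3) (f g h : ℝ → ℝ) (A Bv C : ℝ → R3) (s : ℝ)
    (hf : DifferentiableAt ℝ f s) (hg : DifferentiableAt ℝ g s) (hh : DifferentiableAt ℝ h s)
    (hA : DifferentiableAt ℝ A s) (hB : DifferentiableAt ℝ Bv s)
    (hC : DifferentiableAt ℝ C s) :
    covD γ (fun u => f u • A u + g u • Bv u + h u • C u) s =
      (deriv f s • A s + f s • covD γ A s) + (deriv g s • Bv s + g s • covD γ Bv s) +
      (deriv h s • C s + h s • covD γ C s) := by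
  have h1 : (fun u => ((f u • A u + g u • Bv u + h u • C u : R3)).1) =
      fun u => f u * (A u).1 + g u * (Bv u).1 + h u * (C u).1 := rfl
  have h2 : (fun u => ((f u • A u + g u • Bv u + h u • C u : R3)).2.1) =
      fun u => f u * (A u).2.1 + g u * (Bv u).2.1 + h u * (C u).2.1 := rfl
  have h3 : (fun u => ((f u • A u + g u • Bv u + h u • C u : R3)).2.2) =
      fun u => f u * (A u).2.2 + g u * (Bv u).2.2 + h u * (C u).2.2 := rfl
  rw [covD_def, covD_def, covD_def, covD_def, h1, h2, h3]
  rw [deriv_fun_add (((hf.fun_mul hA.fst).fun_add (hg.fun_mul hB.fst))) (hh.fun_mul hC.fst),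
    deriv_fun_add (hf.fun_mul hA.fst) (hg.fun_mul hB.fst),
    deriv_fun_add (((hf.fun_mul hA.snd.fst).fun_add (hg.fun_mul hB.snd.fst))) (hh.fun_mul hC.snd.fst),
    deriv_fun_add (hf.fun_mul hA.snd.fst) (hg.fun_mul hB.snd.fst),
    deriv_fun_add (((hf.fun_mul hA.snd.snd).fun_add (hg.fun_mul hB.snd.snd))) (hh.fun_mul hC.snd.snd),
    deriv_fun_add (hf.fun_mul hA.snd.snd) (hg.fun_mul hB.snd.snd),
    deriv_fun_mul hf hA.fst, deriv_fun_mul hg hB.fst, deriv_fun_mul hh hC.fst,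
    deriv_fun_mul hf hA.snd.fst, deriv_fun_mul hg hB.snd.fst, deriv_fun_mul hh hC.snd.fst,
    deriv_fun_mul hf hA.snd.snd, deriv_fun_mul hg hB.snd.snd, deriv_fun_mul hh hC.snd.snd]
  simp only [Prod.smul_fst, Prod.smul_snd, smul_eq_mul, Prod.mk_add_mk, Prod.smul_mk,
    Prod.mk.injEq, Prod.fst_add, Prod.snd_add, Prod.ext_iff]
  first
  | refine ⟨by ring, by ring, by ring⟩
  | refine ⟨by ring, by ring⟩
  | ring

end BitAux

/-- The bitension field of a unit-speed curve `γ` in `H₃` with Frenet data `T, N, B, k, τ`: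
`τ₂(γ) = ∇_T³T + R(T,kN)T
       = (-3k'k)T + (k'' - k³ - kτ² + k/4 - kB₃²)N + (-2k'τ - kτ' + kN₃B₃)B`. -/
theorem bitension_formula (γ T N B : ℝ → R3) (k τ : ℝ → ℝ)
    (hF : Frenet γ T N B k τ) (hk : ∀ s, 0 < k s) :
    ∀ s, covD γ (covD γ (covD γ T)) s + Rfr (γ s) (T s) (k s • N s) (T s) =
      (-(3 * deriv k s * k s)) • T s +
      (deriv (deriv k) s - (k s) ^ 3 - k s * (τ s) ^ 2 + k s / 4
        - k s * ((B s).2.2) ^ 2) • N s +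
      (-(2 * deriv k s * τ s) - k s * deriv τ s + k s * (N s).2.2 * (B s).2.2) • B s := by
  have hone : ((⊤ : ℕ∞) : WithTop ℕ∞) ≠ 0 := by
    simp
  have hTd : Differentiable ℝ T := hF.smooth_T.differentiable hone
  have hNd : Differentiable ℝ N := hF.smooth_N.differentiable hone
  have hBd : Differentiable ℝ B := hF.smooth_B.differentiable hone
  have hkd : Differentiable ℝ k := hF.smooth_k.differentiable hone
  have hτd : Differentiable ℝ τ := hF.smooth_τ.differentiable hone
  have hk2 : ContDiff ℝ ((⊤ : ℕ∞) : WithTop ℕ∞) (deriv k) := (contDiff_infty_iff_deriv.mp hF.smooth_k).2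
  have hkdd : Differentiable ℝ (deriv k) := hk2.differentiable hone
  -- orthogonality of T and N
  have hTN : ∀ s, dot (T s) (N s) = 0 := by
    intro s
    have hc := hF.fr1 s
    rw [BitAux.covD_def, ← hF.tangent s] at hc
    have h1 := congrArg Prod.fst hc
    have h2 := congrArg (fun v : R3 => v.2.1) hc
    have h3 := congrArg (fun v : R3 => v.2.2) hc
    simp only [Prod.smul_fst, Prod.smul_snd, smul_eq_mul] at h1 h2 h3
    have hdd : deriv (fun u => dot (T u) (T u)) s =
        2 * ((T s).1 * deriv (fun u => (T u).1) s + (T s).2.1 * deriv (fun u => (T u).2.1) s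
          + (T s).2.2 * deriv (fun u => (T u).2.2) s) := by
      rw [show (fun u => dot (T u) (T u)) =
        fun u => (T u).1 * (T u).1 + (T u).2.1 * (T u).2.1 + (T u).2.2 * (T u).2.2 from rfl]
      rw [deriv_fun_add (((hTd s).fst.fun_mul (hTd s).fst).fun_add ((hTd s).snd.fst.fun_mul (hTd s).snd.fst))
        ((hTd s).snd.snd.fun_mul (hTd s).snd.snd),
        deriv_fun_add ((hTd s).fst.fun_mul (hTd s).fst) ((hTd s).snd.fst.fun_mul (hTd s).snd.fst),
        deriv_fun_mul (hTd s).fst (hTd s).fst, deriv_fun_mul (hTd s).snd.fst (hTd s).snd.fst,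
        deriv_fun_mul (hTd s).snd.snd (hTd s).snd.snd]
      ring
    have h0 : deriv (fun u => dot (T u) (T u)) s = 0 := by
      rw [funext hF.unit]
      exact deriv_const s 1
    have hk0 : k s * dot (T s) (N s) = 0 := by
      simp only [dot]
      linear_combination (1 / 2) * h0 - (1 / 2) * hdd - (T s).1 * h1 - (T s).2.1 * h2
        - (T s).2.2 * h3
    exact (mul_eq_zero.mp hk0).resolve_left (ne_of_gt (hk s))
  intro s
  -- second covariant derivative
  have h2fun : covD γ (covD γ T) =
      fun u => (-(k u * k u)) • T u + deriv k u • N u + (-(k u * τ u)) • B u := by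
    funext u
    rw [show covD γ T = fun v => k v • N v from funext hF.fr1]
    rw [BitAux.covD_smul γ k N u (hkd u) (hNd u), hF.fr2 u]
    simp only [Prod.ext_iff, Prod.fst_add, Prod.snd_add, Prod.smul_fst, Prod.smul_snd,
      smul_eq_mul, Prod.fst_sub, Prod.snd_sub, Prod.fst_neg, Prod.snd_neg]
    refine ⟨by ring, by ring, by ring⟩
  -- third covariant derivative
  have hdf : DifferentiableAt ℝ (fun u => -(k u * k u)) s := ((hkd s).mul (hkd s)).neg
  have hdh : DifferentiableAt ℝ (fun u => -(k u * τ u)) s := ((hkd s).mul (hτd s)).neg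
  have h3 := BitAux.covD_comb γ (fun u => -(k u * k u)) (deriv k) (fun u => -(k u * τ u))
    T N B s hdf (hkdd s) hdh (hTd s) (hNd s) (hBd s)
  have hdf' : deriv (fun u => -(k u * k u)) s = -(deriv k s * k s + k s * deriv k s) := by
    rw [deriv.fun_neg, deriv_fun_mul (hkd s) (hkd s)]
  have hdh' : deriv (fun u => -(k u * τ u)) s = -(deriv k s * τ s + k s * deriv τ s) := by
    rw [deriv.fun_neg, deriv_fun_mul (hkd s) (hτd s)]
  rw [h2fun, h3, hdf', hdh', hF.fr1 s, hF.fr2 s, hF.fr3 s,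
    BitAux.curv (γ s) (k s) (T s) (N s) (hF.unit s) (hF.normal_unit s) (hTN s),
    hF.binormal s]
  simp only [cross, Prod.ext_iff, Prod.fst_add, Prod.snd_add, Prod.smul_fst, Prod.smul_snd,
    smul_eq_mul, Prod.fst_sub, Prod.snd_sub, Prod.fst_neg, Prod.snd_neg]
  refine ⟨by ring, by ring, by ring⟩
end
end

section
/- A unit-speed curve γ : I → H3 with geodesic curvature k > 0, geodesic torsion τ, and Frenet frame {T,N,B} is biharmonic (i.e. ∇_T³T + R(T, ∇_T T)T = 0) if and only if k is constant, k² + τ² = 1/4 - B₃², and τ' = N₃B₃, where N₃ = g(N,e3) and B₃ = g(B,e3). -/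
noncomputable section

def gam (x y : R3) : R3 :=
  ((x.2.1*y.2.2 + x.2.2*y.2.1)/2, -((x.1*y.2.2 + x.2.2*y.1)/2), (x.1*y.2.1 - x.2.1*y.1)/2)

def Rfrm (x y z : R3) : R3 :=
  gam y (gam x z) - gam x (gam y z) + gam (0, 0, x.1*y.2.1 - x.2.1*y.1) z

lemma ext_apply (v : R3) (p : R3) :
    ext v p = (v.1, v.2.1, v.2.2 + (v.2.1/2 * p.1 - v.1/2 * p.2.1)) := by
  simp only [ext, e1, e2, e3, Prod.smul_mk, smul_eq_mul, Prod.mk_add_mk, Prod.ext_iff]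
  refine ⟨by ring, by ring, by ring⟩

lemma hasFDerivAt_ext (v : R3) (p : R3) :
    HasFDerivAt (ext v)
      ((0 : R3 →L[ℝ] ℝ).prod ((0 : R3 →L[ℝ] ℝ).prod
        ((v.2.1/2) • (ContinuousLinearMap.fst ℝ ℝ (ℝ × ℝ)) -
         (v.1/2) • ((ContinuousLinearMap.fst ℝ ℝ ℝ).comp (ContinuousLinearMap.snd ℝ ℝ (ℝ × ℝ)))))) p := by
  have hfn : ext v = fun p : R3 => ((v.1 : ℝ), ((v.2.1 : ℝ), (v.2.2 + (v.2.1/2 * p.1 - v.1/2 * p.2.1) : ℝ))) := by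
    funext q; exact ext_apply v q
  rw [hfn]
  have h1 : HasFDerivAt (fun p : R3 => p.1) (ContinuousLinearMap.fst ℝ ℝ (ℝ × ℝ)) p :=
    hasFDerivAt_fst
  have h2 : HasFDerivAt (fun p : R3 => p.2.1)
      ((ContinuousLinearMap.fst ℝ ℝ ℝ).comp (ContinuousLinearMap.snd ℝ ℝ (ℝ × ℝ))) p :=
    hasFDerivAt_snd.fst
  have h3 : HasFDerivAt (fun p : R3 => v.2.2 + (v.2.1/2 * p.1 - v.1/2 * p.2.1))
      ((v.2.1/2) • (ContinuousLinearMap.fst ℝ ℝ (ℝ × ℝ)) -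
       (v.1/2) • ((ContinuousLinearMap.fst ℝ ℝ ℝ).comp (ContinuousLinearMap.snd ℝ ℝ (ℝ × ℝ)))) p := by
    exact ((h1.const_mul (v.2.1/2)).sub (h2.const_mul (v.1/2))).const_add v.2.2
  exact HasFDerivAt.prodMk (hasFDerivAt_const v.1 p) (HasFDerivAt.prodMk (hasFDerivAt_const v.2.1 p) h3)

lemma bracket_ext (v w : R3) (p : R3) :
    bracket (ext v) (ext w) p = ((0:ℝ), (0:ℝ), v.1*w.2.1 - v.2.1*w.1) := by
  simp only [bracket, (hasFDerivAt_ext v p).fderiv, (hasFDerivAt_ext w p).fderiv]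
  simp only [ContinuousLinearMap.prod_apply, ContinuousLinearMap.zero_apply,
    ContinuousLinearMap.sub_apply, ContinuousLinearMap.smul_apply,
    ContinuousLinearMap.coe_fst', ContinuousLinearMap.coe_comp', Function.comp_apply,
    ContinuousLinearMap.coe_snd', smul_eq_mul, ext_apply, Prod.mk_sub_mk, Prod.ext_iff]
  refine ⟨by ring, by ring, by ring⟩

lemma R3_ext {v w : R3} (h1 : v.1 = w.1) (h2 : v.2.1 = w.2.1) (h3 : v.2.2 = w.2.2) :
    v = w := Prod.ext h1 (Prod.ext h2 h3)

lemma gm_ext_const (v w : R3) :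
    (fun q => gm q (ext v q) (ext w q)) = fun _ => dot v w := by
  funext q
  simp only [gm, dot, ext_apply]
  ring

lemma koszul_ext (x y z : R3) (p : R3) :
    koszul (ext x) (ext y) (ext z) p = dot (gam x y) z := by
  simp only [koszul, dd]
  rw [gm_ext_const, gm_ext_const, gm_ext_const]
  simp only [fderiv_const, fderiv_const_apply, Pi.zero_apply, ContinuousLinearMap.zero_apply, bracket_ext]
  simp only [gm, ext_apply, dot, gam]
  ring

lemma e1_ext : e1 = ext (1, 0, 0) := by
  funext p
  refine R3_ext ?_ ?_ ?_ <;> simp [e1, ext_apply] <;> ring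

lemma e2_ext : e2 = ext (0, 1, 0) := by
  funext p
  refine R3_ext ?_ ?_ ?_ <;> simp [e2, ext_apply] <;> ring

lemma e3_ext : e3 = ext (0, 0, 1) := by
  funext p
  refine R3_ext ?_ ?_ ?_ <;> simp [e3, ext_apply] <;> ring

lemma nabla_ext (x y : R3) : nabla (ext x) (ext y) = ext (gam x y) := by
  funext p
  simp only [nabla]
  rw [e1_ext, e2_ext, e3_ext]
  simp only [koszul_ext]
  refine R3_ext ?_ ?_ ?_ <;>
    simp only [ext_apply, dot, gam, Prod.smul_mk, smul_eq_mul, Prod.mk_add_mk] <;> ring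

lemma bracket_ext_fun (v w : R3) :
    bracket (ext v) (ext w) = ext ((0:ℝ), (0:ℝ), v.1*w.2.1 - v.2.1*w.1) := by
  funext p
  rw [bracket_ext, ext_apply]
  refine R3_ext rfl rfl ?_
  norm_num

lemma fc_ext (p v : R3) : fc p (ext v p) = v := by
  refine R3_ext ?_ ?_ ?_ <;> simp only [fc, ext_apply] <;> ring

lemma Rfr_eq (p x y z : R3) : Rfr p x y z = Rfrm x y z := by
  simp only [Rfr, Rc, bracket_ext_fun, nabla_ext]
  refine R3_ext ?_ ?_ ?_ <;>
    simp only [Rfrm, fc, ext_apply, gam, Prod.mk_add_mk, Prod.neg_mk, Prod.mk_sub_mk,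
      Prod.fst_add, Prod.snd_add, Prod.fst_neg, Prod.snd_neg, Prod.fst_sub, Prod.snd_sub] <;>
    ring

lemma Rfrm_smul₂ (c : ℝ) (x y z : R3) : Rfrm x (c • y) z = c • Rfrm x y z := by
  refine R3_ext ?_ ?_ ?_ <;>
    simp only [Rfrm, gam, Prod.mk_add_mk, Prod.mk_sub_mk, Prod.smul_fst, Prod.smul_snd,
      Prod.fst_add, Prod.snd_add, Prod.fst_sub, Prod.snd_sub, smul_eq_mul] <;>
    ring

lemma Rfrm_TNT (T N : R3) (hTT : dot T T = 1) (hNN : dot N N = 1) (hTN : dot T N = 0) :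
    Rfrm T N T = (1/4 - ((cross T N).2.2)^2) • N + (N.2.2 * (cross T N).2.2) • cross T N := by
  obtain ⟨T1, T2, T3⟩ := T
  obtain ⟨N1, N2, N3⟩ := N
  simp only [dot] at hTT hNN hTN
  refine R3_ext ?_ ?_ ?_ <;>
    simp only [Rfrm, gam, cross, Prod.mk_add_mk, Prod.mk_sub_mk, Prod.smul_mk, smul_eq_mul,
      Prod.fst_add, Prod.snd_add]
  · linear_combination (N1/4) * hTT + (T2^2*N1 + T1*T3*N3 + T1^2*N1) * hNN +
      (-(T2*N1*N2) + (3/4)*T1 - T1*N3^2 - T1*N1^2) * hTN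
  · linear_combination (N2/4) * hTT + (T2*T3*N3 + T2^2*N2 + T1^2*N2) * hNN +
      ((3/4)*T2 - T2*N3^2 - T2*N2^2 - T1*N1*N2) * hTN
  · linear_combination (N3/4) * hTT + (-(T3/4)) * hTN

lemma diff_fst {V : ℝ → R3} (hV : ContDiff ℝ (⊤ : ℕ∞) V) (s : ℝ) :
    DifferentiableAt ℝ (fun u => (V u).1) s := (hV.differentiable (by simp) s).fst

lemma diff_snd_fst {V : ℝ → R3} (hV : ContDiff ℝ (⊤ : ℕ∞) V) (s : ℝ) :
    DifferentiableAt ℝ (fun u => (V u).2.1) s := (hV.differentiable (by simp) s).snd.fst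

lemma diff_snd_snd {V : ℝ → R3} (hV : ContDiff ℝ (⊤ : ℕ∞) V) (s : ℝ) :
    DifferentiableAt ℝ (fun u => (V u).2.2) s := (hV.differentiable (by simp) s).snd.snd

lemma covD_smul (γ : ℝ → R3) {f : ℝ → ℝ} {V : ℝ → R3}
    (hf : ContDiff ℝ (⊤ : ℕ∞) f) (hV : ContDiff ℝ (⊤ : ℕ∞) V) (s : ℝ) :
    covD γ (fun u => f u • V u) s = deriv f s • V s + f s • covD γ V s := by
  have hfd := hf.differentiable (by simp) s
  have e1 : (fun u => (f u • V u).1) = fun u => f u * (V u).1 := by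
    funext u; simp [Prod.smul_fst]
  have e2 : (fun u => (f u • V u).2.1) = fun u => f u * (V u).2.1 := by
    funext u; simp [Prod.smul_snd]
  have e3 : (fun u => (f u • V u).2.2) = fun u => f u * (V u).2.2 := by
    funext u; simp [Prod.smul_snd]
  refine R3_ext ?_ ?_ ?_ <;>
    simp only [covD, e1, e2, e3, deriv_fun_mul hfd (diff_fst hV s),
      deriv_fun_mul hfd (diff_snd_fst hV s), deriv_fun_mul hfd (diff_snd_snd hV s),
      Prod.smul_fst, Prod.smul_snd, Prod.fst_add, Prod.snd_add, smul_eq_mul] <;>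
    ring

lemma covD_add (γ : ℝ → R3) {V W : ℝ → R3}
    (hV : ContDiff ℝ (⊤ : ℕ∞) V) (hW : ContDiff ℝ (⊤ : ℕ∞) W) (s : ℝ) :
    covD γ (fun u => V u + W u) s = covD γ V s + covD γ W s := by
  have e1 : (fun u => (V u + W u).1) = fun u => (V u).1 + (W u).1 := by
    funext u; simp
  have e2 : (fun u => (V u + W u).2.1) = fun u => (V u).2.1 + (W u).2.1 := by
    funext u; simp
  have e3 : (fun u => (V u + W u).2.2) = fun u => (V u).2.2 + (W u).2.2 := by
    funext u; simp
  refine R3_ext ?_ ?_ ?_ <;>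
    simp only [covD, e1, e2, e3, deriv_fun_add (diff_fst hV s) (diff_fst hW s),
      deriv_fun_add (diff_snd_fst hV s) (diff_snd_fst hW s),
      deriv_fun_add (diff_snd_snd hV s) (diff_snd_snd hW s),
      Prod.fst_add, Prod.snd_add] <;>
    ring

lemma deriv_dot (γ : ℝ → R3) {V W : ℝ → R3}
    (hV : ContDiff ℝ (⊤ : ℕ∞) V) (hW : ContDiff ℝ (⊤ : ℕ∞) W) (s : ℝ) :
    deriv (fun u => dot (V u) (W u)) s =
      dot (covD γ V s) (W s) + dot (V s) (covD γ W s) := by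
  have hd : (fun u => dot (V u) (W u)) =
      fun u => (V u).1 * (W u).1 + (V u).2.1 * (W u).2.1 + (V u).2.2 * (W u).2.2 := by
    funext u; rfl
  rw [hd, deriv_fun_add (((diff_fst hV s).fun_mul (diff_fst hW s)).fun_add
        ((diff_snd_fst hV s).fun_mul (diff_snd_fst hW s)))
        ((diff_snd_snd hV s).fun_mul (diff_snd_snd hW s)),
    deriv_fun_add ((diff_fst hV s).fun_mul (diff_fst hW s))
        ((diff_snd_fst hV s).fun_mul (diff_snd_fst hW s)),
    deriv_fun_mul (diff_fst hV s) (diff_fst hW s),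
    deriv_fun_mul (diff_snd_fst hV s) (diff_snd_fst hW s),
    deriv_fun_mul (diff_snd_snd hV s) (diff_snd_snd hW s)]
  simp only [covD, dot]
  ring

/-- A non-geodesic unit-speed curve in `H₃` is biharmonic iff `k` is a nonzero constant,
`k² + τ² = 1/4 - B₃²` and `τ' = N₃B₃`. -/
theorem biharmonic_iff_system (γ T N B : ℝ → R3) (k τ : ℝ → ℝ)
    (hF : Frenet γ T N B k τ) (hk : ∀ s, 0 < k s) :
    Biharmonic γ T ↔
      ((∀ s t, k s = k t) ∧
       (∀ s, (k s) ^ 2 + (τ s) ^ 2 = 1 / 4 - ((B s).2.2) ^ 2) ∧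
       (∀ s, deriv τ s = (N s).2.2 * (B s).2.2)) := by
  obtain ⟨hγ, hT, hN, hB, hks, hτs, htan, hunit, hNunit, hfr1, hfr2, hfr3, hbin⟩ := hF
  have hdk : ContDiff ℝ (⊤:ℕ∞) (deriv k) := (contDiff_infty_iff_deriv.mp hks).2
  have hkd : ∀ s, DifferentiableAt ℝ k s := fun s =>
    hks.differentiable (by simp) s
  have hτd : ∀ s, DifferentiableAt ℝ τ s := fun s =>
    hτs.differentiable (by simp) s
  have hdkd : ∀ s, DifferentiableAt ℝ (deriv k) s := fun s =>
    hdk.differentiable (by simp) s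
  -- orthogonality relations
  have hTN : ∀ s, dot (T s) (N s) = 0 := by
    intro s
    have h0 : deriv (fun u => dot (T u) (T u)) s = 0 := by
      have he : (fun u => dot (T u) (T u)) = fun _ => (1:ℝ) := funext hunit
      rw [he, deriv_const]
    rw [deriv_dot γ hT hT s, hfr1 s] at h0
    simp only [dot, Prod.smul_fst, Prod.smul_snd, smul_eq_mul] at h0
    have hz : k s * dot (T s) (N s) = 0 := by simp only [dot]; linarith
    rcases mul_eq_zero.mp hz with h | h
    · exact absurd h (hk s).ne'
    · exact h
  have hTB : ∀ s, dot (T s) (B s) = 0 := by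
    intro s; rw [hbin s]; simp only [dot, cross]; ring
  have hNB : ∀ s, dot (N s) (B s) = 0 := by
    intro s; rw [hbin s]; simp only [dot, cross]; ring
  have hBB : ∀ s, dot (B s) (B s) = 1 := by
    intro s
    have h1 := hunit s; have h2 := hNunit s; have h3 := hTN s
    rw [hbin s]
    simp only [dot, cross] at h1 h2 h3 ⊢
    linear_combination ((N s).1^2 + (N s).2.1^2 + (N s).2.2^2) * h1 + h2
      - ((T s).1*(N s).1 + (T s).2.1*(N s).2.1 + (T s).2.2*(N s).2.2) * h3
  -- projection onto the frame
  have proj : ∀ (s : ℝ) (a b c : ℝ), a • T s + b • N s + c • B s = 0 →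
      a = 0 ∧ b = 0 ∧ c = 0 := by
    intro s a b c h
    have E1 := congrArg (fun v : R3 => v.1) h
    have E2 := congrArg (fun v : R3 => v.2.1) h
    have E3 := congrArg (fun v : R3 => v.2.2) h
    simp only [Prod.fst_add, Prod.snd_add, Prod.smul_fst, Prod.smul_snd, smul_eq_mul,
      Prod.fst_zero, Prod.snd_zero] at E1 E2 E3
    have h1 := hunit s; have h2 := hNunit s; have h3 := hTN s
    have h4 := hTB s; have h5 := hNB s; have h6 := hBB s
    simp only [dot] at h1 h2 h3 h4 h5 h6
    refine ⟨?_, ?_, ?_⟩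
    · linear_combination (T s).1 * E1 + (T s).2.1 * E2 + (T s).2.2 * E3
        - a*h1 - b*h3 - c*h4
    · linear_combination (N s).1 * E1 + (N s).2.1 * E2 + (N s).2.2 * E3
        - a*h3 - b*h2 - c*h5
    · linear_combination (B s).1 * E1 + (B s).2.1 * E2 + (B s).2.2 * E3
        - a*h4 - b*h5 - c*h6
  -- the key closed-form expression for the bitension field
  have h1fun : covD γ T = fun u => k u • N u := funext hfr1
  have h2fun : covD γ (fun u => k u • N u) =
      fun u => (-(k u * k u)) • T u + ((deriv k u) • N u + (-(k u * τ u)) • B u) := by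
    funext u
    rw [covD_smul γ hks hN u, hfr2 u]
    refine R3_ext ?_ ?_ ?_ <;>
      simp only [Prod.fst_add, Prod.snd_add, Prod.fst_sub, Prod.snd_sub, Prod.fst_neg,
        Prod.snd_neg, Prod.smul_fst, Prod.smul_snd, smul_eq_mul] <;> ring
  have key : ∀ s, bitension γ T s =
      (-(3 * k s * deriv k s)) • T s +
      (deriv (deriv k) s - k s^3 - k s * τ s^2 + k s * (1/4 - ((B s).2.2)^2)) • N s +
      (-(2 * deriv k s * τ s) - k s * deriv τ s + k s * ((N s).2.2 * (B s).2.2)) • B s := by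
    intro s
    have hA : ContDiff ℝ (⊤:ℕ∞) (fun u => (-(k u * k u)) • T u) :=
      ((hks.mul hks).neg).smul hT
    have hBC : ContDiff ℝ (⊤:ℕ∞) (fun u => (deriv k u) • N u + (-(k u * τ u)) • B u) :=
      (hdk.smul hN).add (((hks.mul hτs).neg).smul hB)
    have step3 : covD γ (fun u => (-(k u * k u)) • T u +
        ((deriv k u) • N u + (-(k u * τ u)) • B u)) s =
        covD γ (fun u => (-(k u * k u)) • T u) s +
        (covD γ (fun u => (deriv k u) • N u) s + covD γ (fun u => (-(k u * τ u)) • B u) s) := by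
      rw [covD_add γ hA hBC s, covD_add γ (V := fun u => (deriv k u) • N u) (W := fun u => (-(k u * τ u)) • B u)
          (hdk.smul hN) (((hks.mul hτs).neg).smul hB) s]
    have d1 : deriv (fun u => -(k u * k u)) s = -(2 * k s * deriv k s) := by
      rw [deriv.fun_neg, deriv_fun_mul (hkd s) (hkd s)]; ring
    have d3 : deriv (fun u => -(k u * τ u)) s = -(deriv k s * τ s + k s * deriv τ s) := by
      rw [deriv.fun_neg, deriv_fun_mul (hkd s) (hτd s)]
    have c1 : covD γ (fun u => (-(k u * k u)) • T u) s =
        (-(2 * k s * deriv k s)) • T s + (-(k s * k s)) • (k s • N s) := by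
      rw [covD_smul γ (f := fun u => -(k u * k u)) ((hks.mul hks).neg) hT s, d1, hfr1 s]
    have c2 : covD γ (fun u => (deriv k u) • N u) s =
        (deriv (deriv k) s) • N s + (deriv k s) • (-(k s • T s) - τ s • B s) := by
      rw [covD_smul γ hdk hN s, hfr2 s]
    have c3 : covD γ (fun u => (-(k u * τ u)) • B u) s =
        (-(deriv k s * τ s + k s * deriv τ s)) • B s + (-(k s * τ s)) • (τ s • N s) := by
      rw [covD_smul γ (f := fun u => -(k u * τ u)) ((hks.mul hτs).neg) hB s, d3, hfr3 s]
    have hRfr : Rfr (γ s) (T s) (k s • N s) (T s) =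
        k s • ((1/4 - ((B s).2.2)^2) • N s + ((N s).2.2 * (B s).2.2) • B s) := by
      rw [Rfr_eq, Rfrm_smul₂]
      congr 1
      have := Rfrm_TNT (T s) (N s) (hunit s) (hNunit s) (hTN s)
      rw [this, ← hbin s]
    rw [bitension, h1fun, h2fun, step3, c1, c2, c3]
    simp only [hRfr]
    refine R3_ext ?_ ?_ ?_ <;>
      simp only [Prod.fst_add, Prod.snd_add, Prod.fst_sub, Prod.snd_sub, Prod.fst_neg,
        Prod.snd_neg, Prod.smul_fst, Prod.smul_snd, smul_eq_mul] <;> ring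
  constructor
  · intro hbh
    have hcomp : ∀ s, -(3 * k s * deriv k s) = 0 ∧
        (deriv (deriv k) s - k s^3 - k s * τ s^2 + k s * (1/4 - ((B s).2.2)^2)) = 0 ∧
        (-(2 * deriv k s * τ s) - k s * deriv τ s + k s * ((N s).2.2 * (B s).2.2)) = 0 := by
      intro s
      apply proj s
      rw [← key s]
      exact hbh s
    have hk' : ∀ s, deriv k s = 0 := by
      intro s
      have h := (hcomp s).1
      have : k s * deriv k s = 0 := by linarith
      rcases mul_eq_zero.mp this with h' | h'
      · exact absurd h' (hk s).ne'
      · exact h'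
    have hconst : ∀ s t, k s = k t :=
      is_const_of_deriv_eq_zero (hks.differentiable (by simp)) hk'
    have hk'' : ∀ s, deriv (deriv k) s = 0 := by
      intro s
      have : deriv k = fun _ => (0:ℝ) := funext hk'
      rw [this, deriv_const]
    refine ⟨hconst, ?_, ?_⟩
    · intro s
      have h := (hcomp s).2.1
      rw [hk'' s] at h
      have : k s * (k s^2 + τ s^2 - (1/4 - ((B s).2.2)^2)) = 0 := by linear_combination -h
      rcases mul_eq_zero.mp this with h' | h'
      · exact absurd h' (hk s).ne'
      · linarith
    · intro s
      have h := (hcomp s).2.2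
      rw [hk' s] at h
      have : k s * ((N s).2.2 * (B s).2.2 - deriv τ s) = 0 := by linear_combination h
      rcases mul_eq_zero.mp this with h' | h'
      · exact absurd h' (hk s).ne'
      · linarith
  · rintro ⟨hconst, heq2, heq3⟩ s
    have hk' : ∀ u, deriv k u = 0 := by
      intro u
      have : k = fun _ => k 0 := funext fun x => hconst x 0
      rw [this, deriv_const]
    have hk'' : deriv (deriv k) s = 0 := by
      have : deriv k = fun _ => (0:ℝ) := funext hk'
      rw [this, deriv_const]
    rw [key s, hk' s, hk'']
    have e2 := heq2 s
    have e3 := heq3 s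
    refine R3_ext ?_ ?_ ?_ <;>
      simp only [Prod.fst_add, Prod.snd_add, Prod.smul_fst, Prod.smul_snd, smul_eq_mul,
        Prod.fst_zero, Prod.snd_zero]
    · linear_combination (-(k s) * (N s).1) * e2 + (-(k s) * (B s).1) * e3
    · linear_combination (-(k s) * (N s).2.1) * e2 + (-(k s) * (B s).2.1) * e3
    · linear_combination (-(k s) * (N s).2.2) * e2 + (-(k s) * (B s).2.2) * e3
end
end

section
/- A unit-speed non-geodesic curve γ : I → H3 is biharmonic if and only if its geodesic curvature k and geodesic torsion τ are constants and k² + τ² = 1/4 - B₃² with N₃B₃ = 0, where N₃ = g(N,e3), B₃ = g(B,e3). In particular every non-geodesic biharmonic curve in H3 is a helix (k, τ constant). -/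
noncomputable section

namespace Helix

/-- Christoffel bilinear form of the Heisenberg connection in the frame. -/
def Gam (x y : R3) : R3 :=
  ((x.2.1 * y.2.2 + x.2.2 * y.2.1) / 2, -(x.1 * y.2.2 + x.2.2 * y.1) / 2,
    (x.1 * y.2.1 - x.2.1 * y.1) / 2)

/-- Linear part of `ext v`. -/
def Lv (v : R3) : R3 →L[ℝ] R3 :=
  (0 : R3 →L[ℝ] ℝ).prod ((0 : R3 →L[ℝ] ℝ).prod
    ((v.2.1 / 2) • (ContinuousLinearMap.fst ℝ ℝ (ℝ × ℝ)) -
      (v.1 / 2) • ((ContinuousLinearMap.fst ℝ ℝ ℝ).comp (ContinuousLinearMap.snd ℝ ℝ (ℝ × ℝ)))))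

lemma Lv_apply (v q : R3) : Lv v q = (0, 0, v.2.1 / 2 * q.1 - v.1 / 2 * q.2.1) := by
  simp [Lv]

lemma ext_apply (v p : R3) :
    ext v p = (v.1, v.2.1, v.2.2 + (v.2.1 / 2 * p.1 - v.1 / 2 * p.2.1)) := by
  simp [ext, e1, e2, e3, Prod.ext_iff]
  ring_nf

lemma hasFDerivAt_ext (v q : R3) : HasFDerivAt (ext v) (Lv v) q := by
  have h : ext v = fun q => ((v.1, v.2.1, v.2.2) : R3) + Lv v q := by
    funext q
    rw [ext_apply, Lv_apply]
    simp [Prod.ext_iff]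
  rw [h]
  exact ((Lv v).hasFDerivAt).const_add _

lemma fderiv_ext (v q : R3) : fderiv ℝ (ext v) q = Lv v := (hasFDerivAt_ext v q).fderiv

lemma bracket_ext (x y : R3) :
    bracket (ext x) (ext y) = ext (0, 0, x.1 * y.2.1 - x.2.1 * y.1) := by
  funext p
  rw [bracket]
  rw [fderiv_ext, fderiv_ext, Lv_apply, Lv_apply, ext_apply, ext_apply, ext_apply]
  simp [Prod.ext_iff]
  ring

lemma gm_ext_ext (v w : R3) :
    (fun q => gm q (ext v q) (ext w q)) =
      fun _ => v.1 * w.1 + v.2.1 * w.2.1 + v.2.2 * w.2.2 := by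
  funext q
  rw [ext_apply, ext_apply, gm]
  ring

lemma gm_ext_ext_pt (v w p : R3) :
    gm p (ext v p) (ext w p) = v.1 * w.1 + v.2.1 * w.2.1 + v.2.2 * w.2.2 :=
  congrFun (gm_ext_ext v w) p

lemma koszul_ext (x y z : R3) (p : R3) :
    koszul (ext x) (ext y) (ext z) p =
      ((x.1 * y.2.1 - x.2.1 * y.1) * z.2.2 - (x.1 * z.2.1 - x.2.1 * z.1) * y.2.2
        - (y.1 * z.2.1 - y.2.1 * z.1) * x.2.2) / 2 := by
  rw [koszul]
  simp only [dd]
  rw [gm_ext_ext, gm_ext_ext, gm_ext_ext]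
  rw [bracket_ext, bracket_ext, bracket_ext]
  rw [gm_ext_ext_pt, gm_ext_ext_pt, gm_ext_ext_pt]
  simp [fderiv_const]

end Helix
namespace Helix

lemma e1_eq : e1 = ext (1, 0, 0) := by
  funext p; rw [ext_apply]; simp [e1]; ring
lemma e2_eq : e2 = ext (0, 1, 0) := by
  funext p; rw [ext_apply]; simp [e2]; ring
lemma e3_eq : e3 = ext (0, 0, 1) := by
  funext p; rw [ext_apply]; simp [e3]

lemma nabla_ext (x y : R3) : nabla (ext x) (ext y) = ext (Gam x y) := by
  funext p
  rw [nabla, e1_eq, e2_eq, e3_eq]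
  rw [koszul_ext, koszul_ext, koszul_ext]
  rw [ext_apply, ext_apply, ext_apply, ext_apply]
  simp only [Gam, Prod.ext_iff, Prod.smul_fst, Prod.smul_snd, Prod.fst_add, Prod.snd_add,
    smul_eq_mul]
  norm_num
  refine ⟨by ring, by ring, by ring⟩

lemma Rfr_eq (p x y z : R3) :
    Rfr p x y z =
      -Gam x (Gam y z) + Gam y (Gam x z) + Gam (0, 0, x.1 * y.2.1 - x.2.1 * y.1) z := by
  rw [Rfr, Rc]
  rw [nabla_ext, nabla_ext, nabla_ext, bracket_ext, nabla_ext, nabla_ext]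
  rw [ext_apply, ext_apply, ext_apply]
  simp only [fc, Prod.ext_iff, Prod.fst_add, Prod.snd_add, Prod.fst_neg, Prod.snd_neg]
  refine ⟨trivial, trivial, by ring⟩

end Helix
namespace Helix

lemma d1 {V : ℝ → R3} (hV : ContDiff ℝ (⊤ : ℕ∞) V) : Differentiable ℝ (fun u => (V u).1) :=
  (hV.differentiable (by simp)).fst
lemma d2 {V : ℝ → R3} (hV : ContDiff ℝ (⊤ : ℕ∞) V) : Differentiable ℝ (fun u => (V u).2.1) :=
  ((hV.differentiable (by simp)).snd).fst
lemma d3 {V : ℝ → R3} (hV : ContDiff ℝ (⊤ : ℕ∞) V) : Differentiable ℝ (fun u => (V u).2.2) :=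
  ((hV.differentiable (by simp)).snd).snd

lemma covD_add {V W : ℝ → R3} (hV : ContDiff ℝ (⊤ : ℕ∞) V) (hW : ContDiff ℝ (⊤ : ℕ∞) W)
    (γ : ℝ → R3) (s : ℝ) :
    covD γ (fun u => V u + W u) s = covD γ V s + covD γ W s := by
  simp only [covD]
  have h1 : (fun u => (V u + W u).1) = fun u => (V u).1 + (W u).1 := rfl
  have h2 : (fun u => (V u + W u).2.1) = fun u => (V u).2.1 + (W u).2.1 := rfl
  have h3 : (fun u => (V u + W u).2.2) = fun u => (V u).2.2 + (W u).2.2 := rfl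
  rw [h1, h2, h3, deriv_fun_add ((d1 hV) s) ((d1 hW) s), deriv_fun_add ((d2 hV) s) ((d2 hW) s),
    deriv_fun_add ((d3 hV) s) ((d3 hW) s)]
  simp only [Prod.ext_iff, Prod.fst_add, Prod.snd_add]
  refine ⟨by ring, by ring, by ring⟩

lemma covD_smul {f : ℝ → ℝ} {V : ℝ → R3} (hf : ContDiff ℝ (⊤ : ℕ∞) f)
    (hV : ContDiff ℝ (⊤ : ℕ∞) V) (γ : ℝ → R3) (s : ℝ) :
    covD γ (fun u => f u • V u) s = deriv f s • V s + f s • covD γ V s := by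
  simp only [covD]
  have hfd : Differentiable ℝ f := hf.differentiable (by simp)
  have h1 : (fun u => (f u • V u).1) = fun u => f u * (V u).1 := rfl
  have h2 : (fun u => (f u • V u).2.1) = fun u => f u * (V u).2.1 := rfl
  have h3 : (fun u => (f u • V u).2.2) = fun u => f u * (V u).2.2 := rfl
  rw [h1, h2, h3, deriv_fun_mul (hfd s) ((d1 hV) s), deriv_fun_mul (hfd s) ((d2 hV) s),
    deriv_fun_mul (hfd s) ((d3 hV) s)]
  simp only [Prod.ext_iff, Prod.fst_add, Prod.snd_add, Prod.smul_fst, Prod.smul_snd,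
    smul_eq_mul]
  refine ⟨by ring, by ring, by ring⟩

lemma deriv_dot {V W : ℝ → R3} (hV : ContDiff ℝ (⊤ : ℕ∞) V) (hW : ContDiff ℝ (⊤ : ℕ∞) W)
    (γ : ℝ → R3) (s : ℝ) :
    deriv (fun u => dot (V u) (W u)) s =
      dot (covD γ V s) (W s) + dot (V s) (covD γ W s) := by
  have h : (fun u => dot (V u) (W u)) =
      fun u => (V u).1 * (W u).1 + ((V u).2.1 * (W u).2.1 + (V u).2.2 * (W u).2.2) := by
    funext u; rw [dot]; ring
  rw [h, deriv_fun_add ((d1 hV s).fun_mul (d1 hW s)) (((d2 hV s).fun_mul (d2 hW s)).fun_add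
    ((d3 hV s).fun_mul (d3 hW s))), deriv_fun_add ((d2 hV s).fun_mul (d2 hW s)) ((d3 hV s).fun_mul (d3 hW s)),
    deriv_fun_mul (d1 hV s) (d1 hW s), deriv_fun_mul (d2 hV s) (d2 hW s), deriv_fun_mul (d3 hV s) (d3 hW s)]
  simp only [covD, dot]
  ring

end Helix
namespace Helix

lemma D3_eq {γ T N B : ℝ → R3} {k τ : ℝ → ℝ} (hF : Frenet γ T N B k τ) (s : ℝ) :
    covD γ (covD γ (covD γ T)) s =
      (-(3 * k s * deriv k s)) • T s
      + (deriv (deriv k) s - k s ^ 3 - k s * τ s ^ 2) • N s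
      + (-(2 * deriv k s * τ s + k s * deriv τ s)) • B s := by
  have hkd : Differentiable ℝ k := hF.smooth_k.differentiable (by simp)
  have hτd : Differentiable ℝ τ := hF.smooth_τ.differentiable (by simp)
  have hk' : ContDiff ℝ (⊤ : ℕ∞) (deriv k) := (contDiff_infty_iff_deriv.mp hF.smooth_k).2
  have hA1 : ContDiff ℝ (⊤ : ℕ∞) (fun u => -(k u * k u)) :=
    (hF.smooth_k.mul hF.smooth_k).neg
  have hA3 : ContDiff ℝ (⊤ : ℕ∞) (fun u => -(k u * τ u)) :=
    (hF.smooth_k.mul hF.smooth_τ).neg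
  have h1 : covD γ T = fun u => k u • N u := funext hF.fr1
  have h2 : covD γ (covD γ T) =
      fun u => (-(k u * k u)) • T u + (deriv k u • N u + (-(k u * τ u)) • B u) := by
    funext u
    rw [h1, covD_smul hF.smooth_k hF.smooth_N γ u, hF.fr2 u]
    simp only [Prod.ext_iff, Prod.fst_add, Prod.snd_add, Prod.smul_fst, Prod.smul_snd,
      Prod.fst_neg, Prod.snd_neg, Prod.fst_sub, Prod.snd_sub, smul_eq_mul]
    refine ⟨by ring, by ring, by ring⟩
  rw [h2, covD_add (V := fun u => -(k u * k u) • T u)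
      (W := fun u => deriv k u • N u + -(k u * τ u) • B u) (hA1.smul hF.smooth_T) ((hk'.smul hF.smooth_N).add (hA3.smul hF.smooth_B)) γ s,
    covD_smul hA1 hF.smooth_T γ s,
    covD_add (V := fun u => deriv k u • N u) (W := fun u => -(k u * τ u) • B u)
      (hk'.smul hF.smooth_N) (hA3.smul hF.smooth_B) γ s,
    covD_smul hk' hF.smooth_N γ s, covD_smul hA3 hF.smooth_B γ s,
    hF.fr1 s, hF.fr2 s, hF.fr3 s]
  have e1 : deriv (fun u => -(k u * k u)) s = -(deriv k s * k s + k s * deriv k s) := by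
    rw [deriv.fun_neg, deriv_fun_mul (hkd s) (hkd s)]
  have e3 : deriv (fun u => -(k u * τ u)) s = -(deriv k s * τ s + k s * deriv τ s) := by
    rw [deriv.fun_neg, deriv_fun_mul (hkd s) (hτd s)]
  rw [e1, e3]
  simp only [Prod.ext_iff, Prod.fst_add, Prod.snd_add, Prod.smul_fst, Prod.smul_snd,
    Prod.fst_neg, Prod.snd_neg, Prod.fst_sub, Prod.snd_sub, smul_eq_mul]
  refine ⟨by ring, by ring, by ring⟩

end Helix
namespace Helix

lemma dot_comm (v w : R3) : dot v w = dot w v := by simp only [dot]; ring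

lemma dot_cross_left (t n : R3) : dot (cross t n) t = 0 := by
  simp only [dot, cross]; ring

lemma dot_cross_left' (t n : R3) : dot (cross t n) n = 0 := by
  simp only [dot, cross]; ring

lemma dot_t_cross (t n : R3) : dot t (cross t n) = 0 := by
  simp only [dot, cross]; ring

lemma dot_n_cross (t n : R3) : dot n (cross t n) = 0 := by
  simp only [dot, cross]; ring

lemma dot_cross_cross (t n : R3) (hTT : dot t t = 1) (hNN : dot n n = 1)
    (hTN : dot t n = 0) : dot (cross t n) (cross t n) = 1 := by
  simp only [dot, cross] at hTT hNN hTN ⊢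
  linear_combination (n.1 ^ 2 + n.2.1 ^ 2 + n.2.2 ^ 2) * hTT + hNN
    + (-(n.1 * t.1) - n.2.1 * t.2.1 - n.2.2 * t.2.2) * hTN

lemma crossBT3 (t n : R3) (hTT : dot t t = 1) (hTN : dot t n = 0) :
    (cross t n).1 * t.2.1 - (cross t n).2.1 * t.1 = n.2.2 := by
  simp only [dot, cross] at hTT hTN ⊢
  linear_combination n.2.2 * hTT - t.2.2 * hTN

lemma Rfr_smul_mid (p x z : R3) (c : ℝ) (y : R3) :
    Rfr p x (c • y) z = c • Rfr p x y z := by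
  rw [Rfr_eq, Rfr_eq]
  simp only [Gam, Prod.ext_iff, Prod.fst_add, Prod.snd_add, Prod.fst_neg, Prod.snd_neg,
    Prod.smul_fst, Prod.smul_snd, smul_eq_mul]
  refine ⟨by ring, by ring, by ring⟩

lemma dotR_T (p t n : R3) : dot (Rfr p t n t) t = 0 := by
  rw [Rfr_eq]
  simp only [dot, Gam, Prod.fst_add, Prod.snd_add, Prod.fst_neg, Prod.snd_neg]
  ring

lemma dotR_N (p t n : R3) (hTT : dot t t = 1) (hNN : dot n n = 1) (hTN : dot t n = 0) :
    dot (Rfr p t n t) n = 1 / 4 - ((cross t n).2.2) ^ 2 := by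
  rw [Rfr_eq]
  simp only [dot, cross, Gam, Prod.fst_add, Prod.snd_add, Prod.fst_neg, Prod.snd_neg] at hTT hNN hTN ⊢
  linear_combination (1 / 4 * (n.1 ^ 2 + n.2.1 ^ 2 + n.2.2 ^ 2)) * hTT + (1 / 4) * hNN
    + (-(1 / 4) * (n.1 * t.1 + n.2.1 * t.2.1 + n.2.2 * t.2.2)) * hTN

lemma dotR_B (p t n : R3) (hTT : dot t t = 1) (hNN : dot n n = 1) (hTN : dot t n = 0) :
    dot (Rfr p t n t) (cross t n) = n.2.2 * (cross t n).2.2 := by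
  rw [Rfr_eq]
  simp only [dot, cross, Gam, Prod.fst_add, Prod.snd_add, Prod.fst_neg, Prod.snd_neg] at hTT hNN hTN ⊢
  linear_combination (-(n.1 * n.2.2 * t.2.1) + n.2.1 * n.2.2 * t.1) * hTT
    + (n.1 * t.2.1 * t.2.2 - n.2.1 * t.1 * t.2.2) * hTN

lemma frame_span (t n x : R3) (hTT : dot t t = 1) (hNN : dot n n = 1) (hTN : dot t n = 0)
    (h1 : dot x t = 0) (h2 : dot x n = 0) (h3 : dot x (cross t n) = 0) : x = 0 := by
  simp only [dot, cross] at hTT hNN hTN h1 h2 h3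
  have e1 : x.1 = 0 := by
    linear_combination (n.1 * n.2.1 * x.2.1 + n.1 * n.2.2 * x.2.2 - n.2.1 ^ 2 * x.1
        - n.2.2 ^ 2 * x.1) * hTT
      + (t.1 * t.2.1 * x.2.1 + t.1 * t.2.2 * x.2.2 + t.1 ^ 2 * x.1 - x.1) * hNN
      + (-(n.1 * t.1 * x.1) - n.1 * t.2.1 * x.2.1 - n.1 * t.2.2 * x.2.2 - n.2.1 * t.1 * x.2.1
        + n.2.1 * t.2.1 * x.1 - n.2.2 * t.1 * x.2.2 + n.2.2 * t.2.2 * x.1) * hTN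
      + t.1 * h1 + n.1 * h2 + (-(n.2.1 * t.2.2) + n.2.2 * t.2.1) * h3
  have e2 : x.2.1 = 0 := by
    linear_combination (n.1 * n.2.1 * x.1 - n.1 ^ 2 * x.2.1 + n.2.1 * n.2.2 * x.2.2
        - n.2.2 ^ 2 * x.2.1) * hTT
      + (t.1 * t.2.1 * x.1 + t.2.1 * t.2.2 * x.2.2 + t.2.1 ^ 2 * x.2.1 - x.2.1) * hNN
      + (n.1 * t.1 * x.2.1 - n.1 * t.2.1 * x.1 - n.2.1 * t.1 * x.1 - n.2.1 * t.2.1 * x.2.1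
        - n.2.1 * t.2.2 * x.2.2 - n.2.2 * t.2.1 * x.2.2 + n.2.2 * t.2.2 * x.2.1) * hTN
      + t.2.1 * h1 + n.2.1 * h2 + (n.1 * t.2.2 - n.2.2 * t.1) * h3
  have e3 : x.2.2 = 0 := by
    linear_combination (n.1 * n.2.2 * x.1 + n.2.1 * n.2.2 * x.2.1 + n.2.2 ^ 2 * x.2.2
        - x.2.2) * hTT
      + (t.1 * t.2.2 * x.1 - t.1 ^ 2 * x.2.2 + t.2.1 * t.2.2 * x.2.1 - t.2.1 ^ 2 * x.2.2) * hNN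
      + (n.1 * t.1 * x.2.2 - n.1 * t.2.2 * x.1 + n.2.1 * t.2.1 * x.2.2 - n.2.1 * t.2.2 * x.2.1
        - n.2.2 * t.1 * x.1 - n.2.2 * t.2.1 * x.2.1 - n.2.2 * t.2.2 * x.2.2) * hTN
      + t.2.2 * h1 + n.2.2 * h2 + (-(n.1 * t.2.1) + n.2.1 * t.1) * h3
  exact Prod.ext e1 (Prod.ext e2 e3)

lemma dot_comb (a b c d : ℝ) (t n bb r v : R3) :
    dot (a • t + b • n + c • bb + d • r) v =
      a * dot t v + b * dot n v + c * dot bb v + d * dot r v := by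
  simp only [dot, Prod.fst_add, Prod.snd_add, Prod.smul_fst, Prod.smul_snd, smul_eq_mul]
  ring

end Helix
namespace Helix

lemma hTN0 {γ T N B : ℝ → R3} {k τ : ℝ → ℝ} (hF : Frenet γ T N B k τ)
    (hk : ∀ s, 0 < k s) (s : ℝ) : dot (T s) (N s) = 0 := by
  have hconst : (fun u => dot (T u) (T u)) = fun _ => (1 : ℝ) := funext hF.unit
  have hder : deriv (fun u => dot (T u) (T u)) s = 0 := by rw [hconst]; simp
  rw [deriv_dot hF.smooth_T hF.smooth_T γ s, hF.fr1 s] at hder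
  have hsc : dot (k s • N s) (T s) + dot (T s) (k s • N s) =
      2 * k s * dot (T s) (N s) := by
    simp only [dot, Prod.smul_fst, Prod.smul_snd, smul_eq_mul]
    ring
  rw [hsc] at hder
  have h2 : (2 * k s) * dot (T s) (N s) = 0 := by linarith
  rcases mul_eq_zero.mp h2 with h | h
  · exact absurd h (by have := hk s; linarith)
  · exact h

end Helix
namespace Helix

lemma bitension_dot {γ T N B : ℝ → R3} {k τ : ℝ → ℝ} (hF : Frenet γ T N B k τ)
    (hTN : ∀ s, dot (T s) (N s) = 0) (s : ℝ) :
    dot (bitension γ T s) (T s) = -(3 * k s * deriv k s) ∧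
    dot (bitension γ T s) (N s) =
      deriv (deriv k) s - k s ^ 3 - k s * τ s ^ 2 + k s * (1 / 4 - ((B s).2.2) ^ 2) ∧
    dot (bitension γ T s) (B s) =
      -(2 * deriv k s * τ s + k s * deriv τ s) + k s * ((N s).2.2 * (B s).2.2) := by
  have hbt : bitension γ T s =
      (-(3 * k s * deriv k s)) • T s
      + (deriv (deriv k) s - k s ^ 3 - k s * τ s ^ 2) • N s
      + (-(2 * deriv k s * τ s + k s * deriv τ s)) • B s
      + k s • Rfr (γ s) (T s) (N s) (T s) := by
    rw [bitension, hF.fr1 s, Rfr_smul_mid, D3_eq hF s]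
  have hTT := hF.unit s
  have hNN := hF.normal_unit s
  have hTN' := hTN s
  refine ⟨?_, ?_, ?_⟩
  · rw [hbt, dot_comb, hTT, dot_comm (N s) (T s), hTN', hF.binormal s, dot_cross_left,
      dotR_T]
    ring
  · rw [hbt, dot_comb, hTN', dot_comm (N s) (N s), hNN, hF.binormal s, dot_cross_left',
      dotR_N (γ s) (T s) (N s) hTT hNN hTN']
    ring
  · rw [hbt, dot_comb, hF.binormal s, dot_t_cross, dot_n_cross,
      dot_cross_cross (T s) (N s) hTT hNN hTN',
      dotR_B (γ s) (T s) (N s) hTT hNN hTN']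
    ring

lemma B3_deriv {γ T N B : ℝ → R3} {k τ : ℝ → ℝ} (hF : Frenet γ T N B k τ)
    (hk : ∀ s, 0 < k s) (s : ℝ) :
    deriv (fun u => (B u).2.2) s = (τ s + 1 / 2) * (N s).2.2 := by
  have h3 := congrArg (fun v : R3 => v.2.2) (hF.fr3 s)
  simp only [covD, Prod.smul_snd, smul_eq_mul] at h3
  rw [← hF.tangent s] at h3
  have hc := crossBT3 (T s) (N s) (hF.unit s) (hTN0 hF hk s)
  rw [← hF.binormal s] at hc
  -- h3 : deriv B3 s - (B s).1 * (T s).2.1 / 2 + (B s).2.1 * (T s).1 / 2 = τ s * (N s).2.2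
  linarith [h3, hc]

end Helix

/-- A non-geodesic unit-speed curve in `H₃` is biharmonic iff `k` and `τ` are constant,
`N₃B₃ = 0` and `k² + τ² = 1/4 - B₃²`; in particular every non-geodesic biharmonic curve
in `H₃` is a helix. -/
theorem biharmonic_iff_helix_system (γ T N B : ℝ → R3) (k τ : ℝ → ℝ)
    (hF : Frenet γ T N B k τ) (hk : ∀ s, 0 < k s) :
    Biharmonic γ T ↔
      ((∀ s t, k s = k t) ∧
       (∀ s t, τ s = τ t) ∧
       (∀ s, (N s).2.2 * (B s).2.2 = 0) ∧
       (∀ s, (k s) ^ 2 + (τ s) ^ 2 = 1 / 4 - ((B s).2.2) ^ 2)) := by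
  have hkd : Differentiable ℝ k := hF.smooth_k.differentiable (by simp)
  have hτd : Differentiable ℝ τ := hF.smooth_τ.differentiable (by simp)
  have hB3d : Differentiable ℝ (fun u => (B u).2.2) := Helix.d3 hF.smooth_B
  have hTNa : ∀ s, dot (T s) (N s) = 0 := Helix.hTN0 hF hk
  constructor
  · intro hbh
    have hdz : ∀ v : R3, dot 0 v = 0 := by intro v; simp [dot]
    have eq1 : ∀ s, -(3 * k s * deriv k s) = 0 := by
      intro s
      have h := (Helix.bitension_dot hF hTNa s).1
      rw [hbh s, hdz] at h
      exact h.symm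
    have eq2 : ∀ s, deriv (deriv k) s - k s ^ 3 - k s * τ s ^ 2
        + k s * (1 / 4 - ((B s).2.2) ^ 2) = 0 := by
      intro s
      have h := (Helix.bitension_dot hF hTNa s).2.1
      rw [hbh s, hdz] at h
      exact h.symm
    have eq3 : ∀ s, -(2 * deriv k s * τ s + k s * deriv τ s)
        + k s * ((N s).2.2 * (B s).2.2) = 0 := by
      intro s
      have h := (Helix.bitension_dot hF hTNa s).2.2
      rw [hbh s, hdz] at h
      exact h.symm
    have hk'0 : ∀ s, deriv k s = 0 := by
      intro s
      have h : (3 * k s) * deriv k s = 0 := by linarith [eq1 s]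
      rcases mul_eq_zero.mp h with h | h
      · exact absurd h (by have := hk s; linarith)
      · exact h
    have hk''0 : ∀ s, deriv (deriv k) s = 0 := by
      intro s
      have h : deriv k = fun _ => (0 : ℝ) := funext hk'0
      rw [h]
      simp
    have cond4 : ∀ s, (k s) ^ 2 + (τ s) ^ 2 = 1 / 4 - ((B s).2.2) ^ 2 := by
      intro s
      have h := eq2 s
      rw [hk''0 s] at h
      have hm : k s * (1 / 4 - ((B s).2.2) ^ 2 - ((k s) ^ 2 + (τ s) ^ 2)) = 0 := by
        linear_combination h
      rcases mul_eq_zero.mp hm with hh | hh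
      · exact absurd hh (by have := hk s; linarith)
      · linarith
    have hτ' : ∀ s, deriv τ s = (N s).2.2 * (B s).2.2 := by
      intro s
      have h := eq3 s
      rw [hk'0 s] at h
      have hm : k s * ((N s).2.2 * (B s).2.2 - deriv τ s) = 0 := by linear_combination h
      rcases mul_eq_zero.mp hm with hh | hh
      · exact absurd hh (by have := hk s; linarith)
      · linarith
    have hFfun : (fun u => k u * k u + (τ u * τ u + (B u).2.2 * (B u).2.2)) =
        fun _ => (1 : ℝ) / 4 := by
      funext u
      linear_combination cond4 u
    have hkey : ∀ s, (4 * τ s + 1) * ((N s).2.2 * (B s).2.2) = 0 := by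
      intro s
      have h : deriv (fun u => k u * k u + (τ u * τ u + (B u).2.2 * (B u).2.2)) s = 0 := by
        rw [hFfun]; simp
      rw [deriv_fun_add ((hkd s).fun_mul (hkd s)) (((hτd s).fun_mul (hτd s)).fun_add ((hB3d s).fun_mul (hB3d s))),
        deriv_fun_add ((hτd s).fun_mul (hτd s)) ((hB3d s).fun_mul (hB3d s)),
        deriv_fun_mul (hkd s) (hkd s), deriv_fun_mul (hτd s) (hτd s), deriv_fun_mul (hB3d s) (hB3d s),
        hk'0 s, hτ' s, Helix.B3_deriv hF hk s] at h
      linear_combination h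
    have hHd : Differentiable ℝ (fun u => (τ u + 1 / 4) * (τ u + 1 / 4)) :=
      (hτd.add_const _).mul (hτd.add_const _)
    have hH0 : ∀ s, deriv (fun u => (τ u + 1 / 4) * (τ u + 1 / 4)) s = 0 := by
      intro s
      rw [deriv_fun_mul ((hτd s).add_const _) ((hτd s).add_const _), deriv_add_const, hτ' s]
      linear_combination (1 / 2 : ℝ) * hkey s
    have hHconst := is_const_of_deriv_eq_zero hHd hH0
    have hτ'0 : ∀ s, deriv τ s = 0 := by
      intro s
      by_cases hc : τ s = -(1 / 4)
      · have hτall : ∀ u, τ u = -(1 / 4) := by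
          intro u
          have h0 : (τ u + 1 / 4) * (τ u + 1 / 4) = (τ s + 1 / 4) * (τ s + 1 / 4) :=
            hHconst u s
          rw [hc] at h0
          have h1 : (τ u + 1 / 4) * (τ u + 1 / 4) = 0 := by linear_combination h0
          have := mul_self_eq_zero.mp h1
          linarith
        have h : τ = fun _ => -(1 / 4 : ℝ) := funext hτall
        rw [h]
        simp
      · have h2 : (4 * τ s + 1) * deriv τ s = 0 := by rw [hτ' s]; exact hkey s
        rcases mul_eq_zero.mp h2 with hh | hh
        · exact absurd (by linarith : τ s = -(1 / 4)) hc
        · exact hh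
    refine ⟨is_const_of_deriv_eq_zero hkd hk'0, is_const_of_deriv_eq_zero hτd hτ'0, ?_, cond4⟩
    intro s
    rw [← hτ' s]
    exact hτ'0 s
  · rintro ⟨h1, h2, h3, h4⟩ s
    have hk0 : ∀ u, deriv k u = 0 := by
      have hkf : k = fun _ => k 0 := funext fun u => h1 u 0
      intro u
      rw [hkf]
      simp
    have hτ0 : ∀ u, deriv τ u = 0 := by
      have hτf : τ = fun _ => τ 0 := funext fun u => h2 u 0
      intro u
      rw [hτf]
      simp
    have hk''0 : deriv (deriv k) s = 0 := by
      have h : deriv k = fun _ => (0 : ℝ) := funext hk0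
      rw [h]
      simp
    obtain ⟨e1, e2, e3⟩ := Helix.bitension_dot hF hTNa s
    refine Helix.frame_span (T s) (N s) _ (hF.unit s) (hF.normal_unit s) (hTNa s) ?_ ?_ ?_
    · rw [e1, hk0 s]; ring
    · rw [e2, hk''0]
      linear_combination (-(k s)) * h4 s
    · rw [← hF.binormal s, e3, hk0 s, hτ0 s, h3 s]
      ring
end
end

section
/- For A = (cos α₀ ± √(5cos²α₀ - 4))/2 with 5cos²α₀ > 4 and sin α₀ ≠ 0, and a,b,c,d ∈ ℝ, the curve γ(s) = (x(s), y(s), z(s)) with x(s) = (1/A) sin α₀ sin(As+a) + b, y(s) = -(1/A) sin α₀ cos(As+a) + c, z(s) = (cos α₀ + sin²α₀/(2A)) s - (b/(2A)) sin α₀ cos(As+a) - (c/(2A)) sin α₀ sin(As+a) + d satisfies γ'(s) = sin α₀ cos(As+a) e1(γ(s)) + sin α₀ sin(As+a) e2(γ(s)) + cos α₀ e3(γ(s)); in particular γ is unit speed for the Heisenberg metric. -/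
noncomputable section

open Real in
/-- The explicit curves of Theorem 5.2 have velocity
`sin α₀ cos(As+a) e₁ + sin α₀ sin(As+a) e₂ + cos α₀ e₃`; in particular they are
unit speed for the Heisenberg metric. -/
theorem explicit_biharmonic_curves (α₀ A a b c d : ℝ)
    (hcos : 5 * Real.cos α₀ ^ 2 > 4) (hsin : Real.sin α₀ ≠ 0)
    (hA : A = (Real.cos α₀ + Real.sqrt (5 * Real.cos α₀ ^ 2 - 4)) / 2 ∨
          A = (Real.cos α₀ - Real.sqrt (5 * Real.cos α₀ ^ 2 - 4)) / 2)
    (γ : ℝ → R3)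
    (hγ : ∀ s, γ s =
      (Real.sin α₀ * Real.sin (A * s + a) / A + b,
       -(Real.sin α₀ * Real.cos (A * s + a)) / A + c,
       (Real.cos α₀ + Real.sin α₀ ^ 2 / (2 * A)) * s
         - b / (2 * A) * Real.sin α₀ * Real.cos (A * s + a)
         - c / (2 * A) * Real.sin α₀ * Real.sin (A * s + a) + d)) :
    ∀ s, deriv γ s =
        (Real.sin α₀ * Real.cos (A * s + a)) • e1 (γ s)
          + (Real.sin α₀ * Real.sin (A * s + a)) • e2 (γ s)
          + Real.cos α₀ • e3 (γ s)
      ∧ gm (γ s) (deriv γ s) (deriv γ s) = 1 := by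
  -- `A` is nonzero.
  have hAne : A ≠ 0 := by
    intro h0
    have hsq : Real.sqrt (5 * Real.cos α₀ ^ 2 - 4) ^ 2 = 5 * Real.cos α₀ ^ 2 - 4 :=
      Real.sq_sqrt (by linarith)
    have hc : Real.cos α₀ ^ 2 = 5 * Real.cos α₀ ^ 2 - 4 := by
      rcases hA with h | h
      · have h' : Real.cos α₀ = -Real.sqrt (5 * Real.cos α₀ ^ 2 - 4) := by
          rw [h0] at h; linarith [h]
        have h2 : Real.cos α₀ ^ 2 = Real.sqrt (5 * Real.cos α₀ ^ 2 - 4) ^ 2 := by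
          linear_combination (Real.cos α₀ - Real.sqrt (5 * Real.cos α₀ ^ 2 - 4)) * h'
        rw [hsq] at h2; exact h2
      · have h' : Real.cos α₀ = Real.sqrt (5 * Real.cos α₀ ^ 2 - 4) := by
          rw [h0] at h; linarith [h]
        have h2 : Real.cos α₀ ^ 2 = Real.sqrt (5 * Real.cos α₀ ^ 2 - 4) ^ 2 := by
          linear_combination (Real.cos α₀ + Real.sqrt (5 * Real.cos α₀ ^ 2 - 4)) * h'
        rw [hsq] at h2; exact h2
    have hs2 : Real.sin α₀ ^ 2 = 0 := by
      have := Real.sin_sq_add_cos_sq α₀; nlinarith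
    exact hsin (by simpa using pow_eq_zero_iff (n := 2) (by norm_num) |>.mp hs2)
  intro s
  have hθ : HasDerivAt (fun s : ℝ => A * s + a) A s := by
    simpa using ((hasDerivAt_id s).const_mul A).add_const a
  have hx : HasDerivAt (fun s : ℝ => Real.sin α₀ * Real.sin (A * s + a) / A + b)
      (Real.sin α₀ * Real.cos (A * s + a)) s := by
    have := (((hθ.sin).const_mul (Real.sin α₀)).div_const A).add_const b
    refine this.congr_deriv ?_
    field_simp
  have hy : HasDerivAt (fun s : ℝ => -(Real.sin α₀ * Real.cos (A * s + a)) / A + c)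
      (Real.sin α₀ * Real.sin (A * s + a)) s := by
    have := ((((hθ.cos).const_mul (Real.sin α₀)).neg.div_const A)).add_const c
    refine this.congr_deriv ?_
    field_simp
  have hz : HasDerivAt (fun s : ℝ =>
      (Real.cos α₀ + Real.sin α₀ ^ 2 / (2 * A)) * s
        - b / (2 * A) * Real.sin α₀ * Real.cos (A * s + a)
        - c / (2 * A) * Real.sin α₀ * Real.sin (A * s + a) + d)
      (Real.cos α₀ + Real.sin α₀ ^ 2 / (2 * A)
        + b / 2 * Real.sin α₀ * Real.sin (A * s + a)
        - c / 2 * Real.sin α₀ * Real.cos (A * s + a)) s := by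
    have h1 : HasDerivAt (fun s : ℝ => (Real.cos α₀ + Real.sin α₀ ^ 2 / (2 * A)) * s)
        (Real.cos α₀ + Real.sin α₀ ^ 2 / (2 * A)) s := by
      simpa using (hasDerivAt_id s).const_mul (Real.cos α₀ + Real.sin α₀ ^ 2 / (2 * A))
    have h2 := (hθ.cos).const_mul (b / (2 * A) * Real.sin α₀)
    have h3 := (hθ.sin).const_mul (c / (2 * A) * Real.sin α₀)
    have := ((h1.sub h2).sub h3).add_const d
    refine this.congr_deriv ?_
    field_simp; ring
  have hγd : HasDerivAt γ
      (Real.sin α₀ * Real.cos (A * s + a), Real.sin α₀ * Real.sin (A * s + a),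
        Real.cos α₀ + Real.sin α₀ ^ 2 / (2 * A)
          + b / 2 * Real.sin α₀ * Real.sin (A * s + a)
          - c / 2 * Real.sin α₀ * Real.cos (A * s + a)) s := by
    have hfe : γ = fun s => (Real.sin α₀ * Real.sin (A * s + a) / A + b,
       -(Real.sin α₀ * Real.cos (A * s + a)) / A + c,
       (Real.cos α₀ + Real.sin α₀ ^ 2 / (2 * A)) * s
         - b / (2 * A) * Real.sin α₀ * Real.cos (A * s + a)
         - c / (2 * A) * Real.sin α₀ * Real.sin (A * s + a) + d) := funext hγ
    rw [hfe]
    exact hx.prodMk (hy.prodMk hz)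
  have hd := hγd.deriv
  have hpyth := Real.sin_sq_add_cos_sq (A * s + a)
  have hps := Real.sin_sq_add_cos_sq α₀
  have h1 : deriv γ s =
      (Real.sin α₀ * Real.cos (A * s + a)) • e1 (γ s)
        + (Real.sin α₀ * Real.sin (A * s + a)) • e2 (γ s)
        + Real.cos α₀ • e3 (γ s) := by
    rw [hd, hγ s]
    simp only [e1, e2, e3, Prod.smul_mk, Prod.mk_add_mk, smul_eq_mul, Prod.mk.injEq]
    refine ⟨by ring, by ring, ?_⟩
    linear_combination (-(Real.sin α₀ ^ 2) / (2 * A)) * hpyth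
  refine ⟨h1, ?_⟩
  rw [h1, hγ s]
  simp only [gm, e1, e2, e3, Prod.smul_mk, Prod.mk_add_mk, smul_eq_mul]
  linear_combination Real.sin α₀ ^ 2 * hpyth + hps
end
end
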